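/- arXiv:2509.01023 — 2 statements merged into one kernel-verified Lean document; each statement's English description precedes it below -/
import Mathlib

section
/- Let h = (h_{ls}) be a symmetric array indexed by 1 ≤ l, s ≤ n with values h_{ls} ∈ ℝᵈ (each entry a vector, with h_{ls} = h_{sl}), and let κ₁ ≤ κ₂ ≤ ⋯ ≤ κₙ be real numbers. Fix k with 1 ≤ k < n, and let the eigenvalue clusters be determined by indices 0 = r₀ < r₁ < ⋯ < r_m = n such that κ is constant on each block (r_{j-1}, r_j] and the values on distinct blocks are distinct; let i be the index of the block containing k, so r_{i-1} < k ≤ r_i. Assume h_{ls} = 0 whenever l ≠ s and κ_l = κ_s. Then Σ_{s=1}^{k} Σ_{l : κ_l ≠ κ_s} |h_{ls}|²/(κ_s − κ_l) = Σ_{s=1}^{r_{i-1}} Σ_{l=k+1}^{n} |h_{ls}|²/(κ_s − κ_l) + Σ_{s=r_{i-1}+1}^{k} Σ_{l=r_i+1}^{n} |h_{ls}|²/(κ_s − κ_l), and this quantity is ≤ 0. -/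
/-- Lemma 3.2 of the paper: the key algebraic identity.
`h` is a symmetric array of vectors in ℝᵈ with h_{ls} = 0 whenever l ≠ s and κ_l = κ_s,
κ₁ ≤ ⋯ ≤ κₙ (0-indexed here, so "s = 1..k" becomes `s.val < k`), and the eigenvalue clusters
are determined by 0 = r₀ < r₁ < ⋯ < r_m = n: κ is constant on each block [r_j, r_{j+1}) and
two indices have equal κ-value iff they lie in a common block.  `i` is the (0-indexed) block
containing the index k, i.e. r_i < k ≤ r_{i+1} (so `r i` plays the role of the paper's r_{i-1}
and `r (i+1)` of the paper's r_i).  Then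
Σ_{s<k} Σ_{κ_l ≠ κ_s} |h_{ls}|²/(κ_s − κ_l)
  = Σ_{s < r_i} Σ_{l ≥ k} |h_{ls}|²/(κ_s − κ_l) + Σ_{r_i ≤ s < k} Σ_{l ≥ r_{i+1}} |h_{ls}|²/(κ_s − κ_l)
and this quantity is ≤ 0. -/
theorem stmt_7 {n d m k i : ℕ} (hk1 : 1 ≤ k) (hkn : k < n)
    (κ : Fin n → ℝ) (hmono : Monotone κ)
    (h : Fin n → Fin n → EuclideanSpace ℝ (Fin d))
    (hsymm : ∀ l s, h l s = h s l)
    (hvanish : ∀ l s, l ≠ s → κ l = κ s → h l s = 0)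
    (r : ℕ → ℕ) (hr0 : r 0 = 0) (hrm : r m = n)
    (hrmono : ∀ j, j < m → r j < r (j + 1))
    (hblock : ∀ s t : Fin n, κ s = κ t ↔
      ∃ j < m, r j ≤ s.val ∧ s.val < r (j + 1) ∧ r j ≤ t.val ∧ t.val < r (j + 1))
    (him : i < m) (hki : r i < k ∧ k ≤ r (i + 1)) :
    (∑ s ∈ Finset.univ.filter (fun s : Fin n => s.val < k),
        ∑ l ∈ Finset.univ.filter (fun l : Fin n => κ l ≠ κ s),
          ‖h l s‖ ^ 2 / (κ s - κ l))
      = (∑ s ∈ Finset.univ.filter (fun s : Fin n => s.val < r i),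
          ∑ l ∈ Finset.univ.filter (fun l : Fin n => k ≤ l.val),
            ‖h l s‖ ^ 2 / (κ s - κ l))
        + (∑ s ∈ Finset.univ.filter (fun s : Fin n => r i ≤ s.val ∧ s.val < k),
            ∑ l ∈ Finset.univ.filter (fun l : Fin n => r (i + 1) ≤ l.val),
              ‖h l s‖ ^ 2 / (κ s - κ l)) ∧
    (∑ s ∈ Finset.univ.filter (fun s : Fin n => s.val < k),
        ∑ l ∈ Finset.univ.filter (fun l : Fin n => κ l ≠ κ s),
          ‖h l s‖ ^ 2 / (κ s - κ l)) ≤ 0 := by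
  classical
  obtain ⟨hki1, hki2⟩ := hki
  -- monotonicity of r on [0, m]
  have hrle : ∀ a b : ℕ, a ≤ b → b ≤ m → r a ≤ r b := by
    intro a b hab hbm
    induction b with
    | zero => simp [Nat.le_zero.mp hab]
    | succ b ih =>
      rcases eq_or_lt_of_le hab with h' | h'
      · exact h' ▸ le_refl _
      · exact le_trans (ih (by omega) (by omega)) (le_of_lt (hrmono b (by omega)))
  -- uniqueness of the block containing a given index
  have huniq : ∀ (x j j' : ℕ), j < m → j' < m → r j ≤ x → x < r (j+1) →
      r j' ≤ x → x < r (j'+1) → j = j' := by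
    intro x j j' hj hj' h1 h2 h3 h4
    by_contra hne
    rcases Nat.lt_or_ge j j' with hlt | hge
    · have := hrle (j+1) j' (by omega) (le_of_lt hj')
      omega
    · have := hrle (j'+1) j (by omega) (le_of_lt hj)
      omega
  -- fact (a): cross terms from before block i to after k have distinct κ
  have facta : ∀ s l : Fin n, s.val < r i → k ≤ l.val → κ l ≠ κ s := by
    intro s l hs hl heq
    obtain ⟨j, hj, hl1, hl2, hs1, hs2⟩ := (hblock l s).mp heq
    have hji : j < i := by
      by_contra hc
      have := hrle i j (by omega) (le_of_lt hj)
      omega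
    have := hrle (j+1) i (by omega) (le_of_lt him)
    omega
  -- fact (b): for s in block i and l ≥ k, κ l = κ s iff l < r (i+1)
  have factb : ∀ s l : Fin n, r i ≤ s.val → s.val < k → k ≤ l.val →
      (κ l = κ s ↔ l.val < r (i+1)) := by
    intro s l hs1 hs2 hl
    constructor
    · intro heq
      obtain ⟨j, hj, hl1, hl2, hs3, hs4⟩ := (hblock l s).mp heq
      have hji : j = i := huniq s.val j i hj him hs3 hs4 hs1 (by omega)
      subst hji
      omega
    · intro hl2
      exact (hblock l s).mpr ⟨i, him, by omega, hl2, hs1, by omega⟩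
  -- antisymmetry of the summand
  have hF : ∀ l s : Fin n, ‖h l s‖^2 / (κ s - κ l) = -(‖h s l‖^2 / (κ l - κ s)) := by
    intro l s
    rw [hsymm l s, show κ s - κ l = -(κ l - κ s) by ring, div_neg]
  -- split the inner sum of the LHS
  have hsplit : (∑ s ∈ Finset.univ.filter (fun s : Fin n => s.val < k),
        ∑ l ∈ Finset.univ.filter (fun l : Fin n => κ l ≠ κ s),
          ‖h l s‖ ^ 2 / (κ s - κ l))
      = (∑ s ∈ Finset.univ.filter (fun s : Fin n => s.val < k),
          ∑ l ∈ Finset.univ.filter (fun l : Fin n => κ l ≠ κ s ∧ l.val < k),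
            ‖h l s‖ ^ 2 / (κ s - κ l))
        + (∑ s ∈ Finset.univ.filter (fun s : Fin n => s.val < k),
          ∑ l ∈ Finset.univ.filter (fun l : Fin n => κ l ≠ κ s ∧ k ≤ l.val),
            ‖h l s‖ ^ 2 / (κ s - κ l)) := by
    rw [← Finset.sum_add_distrib]
    refine Finset.sum_congr rfl fun s _ => ?_
    rw [← Finset.sum_filter_add_sum_filter_not
        (Finset.univ.filter (fun l : Fin n => κ l ≠ κ s)) (fun l => l.val < k),
      Finset.filter_filter, Finset.filter_filter]
    congr 1
    apply Finset.sum_congr _ fun _ _ => rfl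
    apply Finset.filter_congr
    intro l _
    simp [not_lt]
  -- the "within first k" part cancels
  have hA : (∑ s ∈ Finset.univ.filter (fun s : Fin n => s.val < k),
        ∑ l ∈ Finset.univ.filter (fun l : Fin n => κ l ≠ κ s ∧ l.val < k),
          ‖h l s‖ ^ 2 / (κ s - κ l)) = 0 := by
    have hswap : (∑ s ∈ Finset.univ.filter (fun s : Fin n => s.val < k),
          ∑ l ∈ Finset.univ.filter (fun l : Fin n => κ l ≠ κ s ∧ l.val < k),
            ‖h l s‖ ^ 2 / (κ s - κ l))
        = (∑ s ∈ Finset.univ.filter (fun s : Fin n => s.val < k),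
          ∑ l ∈ Finset.univ.filter (fun l : Fin n => κ l ≠ κ s ∧ l.val < k),
            ‖h s l‖ ^ 2 / (κ l - κ s)) := by
      rw [Finset.sum_comm' (s' := fun l : Fin n =>
            Finset.univ.filter (fun s : Fin n => κ s ≠ κ l ∧ s.val < k))
          (t' := Finset.univ.filter (fun l : Fin n => l.val < k))]
      · intro x y
        simp only [Finset.mem_filter, Finset.mem_univ, true_and]
        constructor
        · rintro ⟨hx, hy1, hy2⟩; exact ⟨⟨hy1.symm, hx⟩, hy2⟩
        · rintro ⟨⟨h1, h2⟩, h3⟩; exact ⟨h2, h1.symm, h3⟩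
    have : (∑ s ∈ Finset.univ.filter (fun s : Fin n => s.val < k),
          ∑ l ∈ Finset.univ.filter (fun l : Fin n => κ l ≠ κ s ∧ l.val < k),
            ‖h s l‖ ^ 2 / (κ l - κ s))
        = -(∑ s ∈ Finset.univ.filter (fun s : Fin n => s.val < k),
          ∑ l ∈ Finset.univ.filter (fun l : Fin n => κ l ≠ κ s ∧ l.val < k),
            ‖h l s‖ ^ 2 / (κ s - κ l)) := by
      rw [← Finset.sum_neg_distrib]
      refine Finset.sum_congr rfl fun s _ => ?_
      rw [← Finset.sum_neg_distrib]
      refine Finset.sum_congr rfl fun l _ => ?_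
      rw [hF l s]
      ring
    linarith [hswap, this]
  -- the remaining part equals the RHS
  have hB : (∑ s ∈ Finset.univ.filter (fun s : Fin n => s.val < k),
        ∑ l ∈ Finset.univ.filter (fun l : Fin n => κ l ≠ κ s ∧ k ≤ l.val),
          ‖h l s‖ ^ 2 / (κ s - κ l))
      = (∑ s ∈ Finset.univ.filter (fun s : Fin n => s.val < r i),
          ∑ l ∈ Finset.univ.filter (fun l : Fin n => k ≤ l.val),
            ‖h l s‖ ^ 2 / (κ s - κ l))
        + (∑ s ∈ Finset.univ.filter (fun s : Fin n => r i ≤ s.val ∧ s.val < k),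
            ∑ l ∈ Finset.univ.filter (fun l : Fin n => r (i + 1) ≤ l.val),
              ‖h l s‖ ^ 2 / (κ s - κ l)) := by
    rw [← Finset.sum_filter_add_sum_filter_not
        (Finset.univ.filter (fun s : Fin n => s.val < k)) (fun s => s.val < r i),
      Finset.filter_filter, Finset.filter_filter]
    congr 1
    · rw [show (Finset.univ.filter (fun s : Fin n => s.val < k ∧ s.val < r i))
          = Finset.univ.filter (fun s : Fin n => s.val < r i) by
        apply Finset.filter_congr; intro s _; constructor
        · exact fun h' => h'.2
        · exact fun h' => ⟨by omega, h'⟩]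
      refine Finset.sum_congr rfl fun s hs => ?_
      simp only [Finset.mem_filter, Finset.mem_univ, true_and] at hs
      apply Finset.sum_congr _ fun _ _ => rfl
      apply Finset.filter_congr
      intro l _
      exact ⟨fun h' => h'.2, fun h' => ⟨facta s l hs h', h'⟩⟩
    · rw [show (Finset.univ.filter (fun s : Fin n => s.val < k ∧ ¬ s.val < r i))
          = Finset.univ.filter (fun s : Fin n => r i ≤ s.val ∧ s.val < k) by
        apply Finset.filter_congr; intro s _; constructor
        · exact fun h' => ⟨by omega, h'.1⟩
        · exact fun h' => ⟨h'.2, by omega⟩]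
      refine Finset.sum_congr rfl fun s hs => ?_
      simp only [Finset.mem_filter, Finset.mem_univ, true_and] at hs
      apply Finset.sum_congr _ fun _ _ => rfl
      apply Finset.filter_congr
      intro l _
      constructor
      · rintro ⟨h1, h2⟩
        have := (factb s l hs.1 hs.2 h2).not.mp h1
        omega
      · intro h'
        have hkl : k ≤ l.val := le_trans hki2 h'
        exact ⟨fun heq => by have := (factb s l hs.1 hs.2 hkl).mp heq; omega, hkl⟩
  have heq : (∑ s ∈ Finset.univ.filter (fun s : Fin n => s.val < k),
        ∑ l ∈ Finset.univ.filter (fun l : Fin n => κ l ≠ κ s),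
          ‖h l s‖ ^ 2 / (κ s - κ l))
      = (∑ s ∈ Finset.univ.filter (fun s : Fin n => s.val < r i),
          ∑ l ∈ Finset.univ.filter (fun l : Fin n => k ≤ l.val),
            ‖h l s‖ ^ 2 / (κ s - κ l))
        + (∑ s ∈ Finset.univ.filter (fun s : Fin n => r i ≤ s.val ∧ s.val < k),
            ∑ l ∈ Finset.univ.filter (fun l : Fin n => r (i + 1) ≤ l.val),
              ‖h l s‖ ^ 2 / (κ s - κ l)) := by
    rw [hsplit, hA, hB, zero_add]
  refine ⟨heq, ?_⟩
  rw [heq]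
  have hterm : ∀ s l : Fin n, s.val < l.val → ‖h l s‖ ^ 2 / (κ s - κ l) ≤ 0 := by
    intro s l hsl
    apply div_nonpos_of_nonneg_of_nonpos (pow_nonneg (norm_nonneg _) 2)
    have : κ s ≤ κ l := hmono (by exact le_of_lt hsl)
    linarith
  have h1 : (∑ s ∈ Finset.univ.filter (fun s : Fin n => s.val < r i),
      ∑ l ∈ Finset.univ.filter (fun l : Fin n => k ≤ l.val),
        ‖h l s‖ ^ 2 / (κ s - κ l)) ≤ 0 := by
    refine Finset.sum_nonpos fun s hs => Finset.sum_nonpos fun l hl => ?_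
    simp only [Finset.mem_filter, Finset.mem_univ, true_and] at hs hl
    exact hterm s l (by omega)
  have h2 : (∑ s ∈ Finset.univ.filter (fun s : Fin n => r i ≤ s.val ∧ s.val < k),
      ∑ l ∈ Finset.univ.filter (fun l : Fin n => r (i + 1) ≤ l.val),
        ‖h l s‖ ^ 2 / (κ s - κ l)) ≤ 0 := by
    refine Finset.sum_nonpos fun s hs => Finset.sum_nonpos fun l hl => ?_
    simp only [Finset.mem_filter, Finset.mem_univ, true_and] at hs hl
    exact hterm s l (by omega)
  linarith
end

section
/- Let h = (h_{ls}) be a symmetric array with vector values as above, κ₁ ≤ ⋯ ≤ κₙ real numbers, 1 ≤ k < n, with h_{ls} = 0 when l ≠ s and κ_l = κ_s. Then Σ_{s=1}^{k} Σ_{l : κ_l ≠ κ_s} |h_{ls}|²/(κ_s − κ_l) ≤ 0. -/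
/-- sign part of Lemma 3.2 of the paper.
For a symmetric array of vectors h_{ls} ∈ ℝᵈ with h_{ls} = 0 whenever l ≠ s and κ_l = κ_s,
and ordered reals κ₁ ≤ ⋯ ≤ κₙ (0-indexed), for 1 ≤ k < n:
Σ_{s<k} Σ_{l : κ_l ≠ κ_s} |h_{ls}|²/(κ_s − κ_l) ≤ 0. -/
theorem stmt_8 {n d k : ℕ} (hk1 : 1 ≤ k) (hkn : k < n)
    (κ : Fin n → ℝ) (hmono : Monotone κ)
    (h : Fin n → Fin n → EuclideanSpace ℝ (Fin d))
    (hsymm : ∀ l s, h l s = h s l)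
    (hvanish : ∀ l s, l ≠ s → κ l = κ s → h l s = 0) :
    (∑ s ∈ Finset.univ.filter (fun s : Fin n => s.val < k),
        ∑ l ∈ Finset.univ.filter (fun l : Fin n => κ l ≠ κ s),
          ‖h l s‖ ^ 2 / (κ s - κ l)) ≤ 0 := by
  classical
  set g : Fin n → Fin n → ℝ := fun s l => ‖h l s‖ ^ 2 / (κ s - κ l) with hg
  have key : ∀ s l : Fin n, κ l ≠ κ s → g s l + g l s = 0 := by
    intro s l hne
    have hsl : κ l - κ s = -(κ s - κ l) := by ring
    simp only [hg, hsymm l s, hsl, div_neg]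
    ring
  -- indicator form
  set F : Fin n → Fin n → ℝ := fun s l =>
    if s.val < k ∧ κ l ≠ κ s ∧ l.val < k then g s l else 0 with hF
  have hFanti : ∀ s l, F s l + F l s = 0 := by
    intro s l
    by_cases hc : s.val < k ∧ κ l ≠ κ s ∧ l.val < k
    · have hc' : l.val < k ∧ κ s ≠ κ l ∧ s.val < k := ⟨hc.2.2, Ne.symm hc.2.1, hc.1⟩
      simp only [hF, if_pos hc, if_pos hc']
      exact key s l hc.2.1
    · have hc' : ¬(l.val < k ∧ κ s ≠ κ l ∧ s.val < k) := by
        intro hc'; exact hc ⟨hc'.2.2, Ne.symm hc'.2.1, hc'.1⟩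
      simp [hF, if_neg hc, if_neg hc']
  have hFzero : (∑ s : Fin n, ∑ l : Fin n, F s l) = 0 := by
    have h2 : (∑ s : Fin n, ∑ l : Fin n, F s l)
        + (∑ s : Fin n, ∑ l : Fin n, F l s) = 0 := by
      rw [← Finset.sum_add_distrib]
      rw [show (0:ℝ) = ∑ _s : Fin n, 0 by simp]
      refine Finset.sum_congr rfl fun s _ => ?_
      rw [← Finset.sum_add_distrib]
      simp [hFanti]
    have hcomm : (∑ s : Fin n, ∑ l : Fin n, F l s)
        = (∑ s : Fin n, ∑ l : Fin n, F s l) := Finset.sum_comm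
    linarith
  -- split inner sums
  have hsplit : ∀ s : Fin n,
      (∑ l ∈ Finset.univ.filter (fun l : Fin n => κ l ≠ κ s), g s l)
      = (∑ l ∈ (Finset.univ.filter (fun l : Fin n => κ l ≠ κ s)).filter
            (fun l => l.val < k), g s l)
        + (∑ l ∈ (Finset.univ.filter (fun l : Fin n => κ l ≠ κ s)).filter
            (fun l => ¬ l.val < k), g s l) := by
    intro s
    exact (Finset.sum_filter_add_sum_filter_not _ _ _).symm
  calc (∑ s ∈ Finset.univ.filter (fun s : Fin n => s.val < k),
        ∑ l ∈ Finset.univ.filter (fun l : Fin n => κ l ≠ κ s), g s l)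
      = (∑ s ∈ Finset.univ.filter (fun s : Fin n => s.val < k),
          ∑ l ∈ (Finset.univ.filter (fun l : Fin n => κ l ≠ κ s)).filter
            (fun l => l.val < k), g s l)
        + (∑ s ∈ Finset.univ.filter (fun s : Fin n => s.val < k),
          ∑ l ∈ (Finset.univ.filter (fun l : Fin n => κ l ≠ κ s)).filter
            (fun l => ¬ l.val < k), g s l) := by
        rw [← Finset.sum_add_distrib]
        exact Finset.sum_congr rfl fun s _ => hsplit s
    _ ≤ 0 := by
        have hA : (∑ s ∈ Finset.univ.filter (fun s : Fin n => s.val < k),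
            ∑ l ∈ (Finset.univ.filter (fun l : Fin n => κ l ≠ κ s)).filter
              (fun l => l.val < k), g s l) = 0 := by
          rw [← hFzero]
          rw [Finset.sum_filter]
          refine Finset.sum_congr rfl fun s _ => ?_
          by_cases hs : s.val < k
          · rw [if_pos hs, Finset.filter_filter, Finset.sum_filter]
            refine Finset.sum_congr rfl fun l _ => ?_
            simp [hF, hs]
          · rw [if_neg hs]
            simp [hF, hs]
        have hB : (∑ s ∈ Finset.univ.filter (fun s : Fin n => s.val < k),
            ∑ l ∈ (Finset.univ.filter (fun l : Fin n => κ l ≠ κ s)).filter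
              (fun l => ¬ l.val < k), g s l) ≤ 0 := by
          refine Finset.sum_nonpos fun s hs => Finset.sum_nonpos fun l hl => ?_
          simp only [Finset.mem_filter, Finset.mem_univ, true_and] at hs hl
          have hls : s ≤ l := by
            have : s.val < l.val := lt_of_lt_of_le hs (le_of_not_gt hl.2)
            exact le_of_lt this
          have hlt : κ s < κ l := lt_of_le_of_ne (hmono hls) (Ne.symm hl.1)
          exact div_nonpos_of_nonneg_of_nonpos (sq_nonneg _) (by linarith)
        linarith
end
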